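/- arXiv:2601.08639 — 9 statements merged into one kernel-verified Lean document; each statement's English description precedes it below -/
import Mathlib

section
/- Let k, d, t be positive integers and let ε ∈ (0,1] be a real number with t ≥ k²·d/ε. Let G_cov be a finite bipartite graph with parts R and B that is K_{d,d}-free, and suppose every vertex of R has fewer than t neighbors in B. Define the conflict graph G_conf to be the simple graph on vertex set R in which two distinct vertices u, v ∈ R are adjacent if and only if |N(u) ∩ N(v)| ≥ ε·t/k². Then the maximum degree of G_conf is at most (d−1)·(e·k²/ε)^d, where e is Euler's number. -/
open Finset

open scoped Classical

lemma aux_pow_div_le_choose {n d : ℕ} (h : d ≤ n) :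
    ((n : ℝ) / d) ^ d ≤ (n.choose d : ℝ) := by
  rcases Nat.eq_zero_or_pos d with rfl | hd
  · simp
  have hfd : (0 : ℝ) < (Nat.factorial d : ℕ) := by exact_mod_cast Nat.factorial_pos d
  have h2 : ((Nat.factorial d : ℕ) : ℝ) = ∏ i ∈ range d, ((d - i : ℕ) : ℝ) := by
    rw [← Nat.cast_prod, ← Nat.descFactorial_eq_prod_range, Nat.descFactorial_self]
  have h1 : (n.choose d : ℝ) * ((Nat.factorial d : ℕ) : ℝ) = ∏ i ∈ range d, ((n - i : ℕ) : ℝ) := by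
    rw [← Nat.cast_mul, mul_comm, ← Nat.descFactorial_eq_factorial_mul_choose,
      Nat.descFactorial_eq_prod_range, Nat.cast_prod]
  have h3 : (n.choose d : ℝ) = ∏ i ∈ range d, (((n - i : ℕ) : ℝ) / ((d - i : ℕ) : ℝ)) := by
    rw [Finset.prod_div_distrib, ← h2, ← h1, mul_div_assoc, div_self (ne_of_gt hfd), mul_one]
  rw [h3]
  have : ((n : ℝ) / d) ^ d = ∏ _i ∈ range d, ((n : ℝ) / d) := by
    rw [Finset.prod_const, card_range]
  rw [this]
  apply Finset.prod_le_prod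
  · intro i _
    positivity
  · intro i hi
    rw [Finset.mem_range] at hi
    have hid : i ≤ d := le_of_lt hi
    have hin : i ≤ n := hid.trans h
    rw [Nat.cast_sub hin, Nat.cast_sub hid]
    have hdi : (0 : ℝ) < (d : ℝ) - i := by
      have : (i : ℝ) < d := by exact_mod_cast hi
      linarith
    have hd0 : (0 : ℝ) < (d : ℝ) := by exact_mod_cast hd
    rw [div_le_div_iff₀ hd0 hdi]
    have hnd : (d : ℝ) ≤ n := by exact_mod_cast h
    have hi0 : (0 : ℝ) ≤ i := by positivity
    nlinarith

/-- Maximum degree bound for the conflict graph of a `K_{d,d}`-free coverage graph. -/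
theorem stmt_0 {R B : Type*} [Fintype R] [Fintype B]
    (k d t : ℕ) (hk : 0 < k) (hd : 0 < d) (ht : 0 < t)
    (ε : ℝ) (hε0 : 0 < ε) (hε1 : ε ≤ 1)
    (htlarge : (k : ℝ) ^ 2 * d / ε ≤ (t : ℝ))
    (Adj : R → B → Prop)
    (hKdd : ¬ ∃ (S : Finset R) (T : Finset B), S.card = d ∧ T.card = d ∧
      ∀ r ∈ S, ∀ b ∈ T, Adj r b)
    (hdeg : ∀ r : R, (univ.filter fun b => Adj r b).card < t) :
    ∀ u : R,
      (((univ.filter fun v : R => v ≠ u ∧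
          ε * t / (k : ℝ) ^ 2 ≤
            (((univ.filter fun b => Adj u b) ∩ (univ.filter fun b => Adj v b)).card : ℝ)).card : ℝ))
        ≤ ((d : ℝ) - 1) * (Real.exp 1 * (k : ℝ) ^ 2 / ε) ^ d := by
  intro u
  set Nu : Finset B := univ.filter fun b => Adj u b with hNu
  set Nb : R → Finset B := fun v => univ.filter fun b => Adj v b with hNb
  set s : ℝ := ε * t / (k : ℝ) ^ 2 with hs
  set D : Finset R := univ.filter fun v : R => v ≠ u ∧ s ≤ ((Nu ∩ Nb v).card : ℝ) with hD
  have hk0 : (0 : ℝ) < (k : ℝ) ^ 2 := by positivity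
  have ht0 : (0 : ℝ) < t := by exact_mod_cast ht
  have hds : (d : ℝ) ≤ s := by
    rw [hs]
    rw [div_le_iff₀ hε0] at htlarge
    rw [le_div_iff₀ hk0]
    nlinarith
  have hd0 : (0 : ℝ) < (d : ℝ) := by exact_mod_cast hd
  have hs0 : (0 : ℝ) < s := lt_of_lt_of_le hd0 hds
  -- the double-counted sum
  set Scount : ℕ := ∑ v ∈ D, ((Nu ∩ Nb v).card.choose d) with hScount
  -- Step A : Scount ≤ choose(Nu.card, d) * (d-1)
  have stepA : Scount ≤ Nu.card.choose d * (d - 1) := by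
    have hswap : Scount =
        ∑ T ∈ Nu.powersetCard d, (D.filter fun v => T ⊆ Nb v).card := by
      rw [hScount]
      have hterm : ∀ v, ((Nu ∩ Nb v).card.choose d) =
          ((Nu.powersetCard d).filter fun T => T ⊆ Nb v).card := by
        intro v
        rw [← Finset.card_powersetCard]
        congr 1
        ext T
        simp only [Finset.mem_powersetCard, Finset.mem_filter, Finset.subset_inter_iff]
        tauto
      simp_rw [hterm, Finset.card_filter]
      exact Finset.sum_comm
    rw [hswap]
    calc ∑ T ∈ Nu.powersetCard d, (D.filter fun v => T ⊆ Nb v).card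
        ≤ ∑ _T ∈ Nu.powersetCard d, (d - 1) := by
          apply Finset.sum_le_sum
          intro T hT
          by_contra hcon
          push_neg at hcon
          have hdle : d ≤ (D.filter fun v => T ⊆ Nb v).card := by omega
          obtain ⟨S', hS'sub, hS'card⟩ := Finset.exists_subset_card_eq hdle
          rw [Finset.mem_powersetCard] at hT
          apply hKdd
          refine ⟨S', T, hS'card, hT.2, ?_⟩
          intro r hr b hb
          have := hS'sub hr
          rw [Finset.mem_filter] at this
          have hbNb := this.2 hb
          rw [hNb] at hbNb
          simp only [Finset.mem_filter] at hbNb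
          exact hbNb.2
      _ = Nu.card.choose d * (d - 1) := by
          rw [Finset.sum_const, Finset.card_powersetCard, smul_eq_mul]
  -- Step B : (D.card : ℝ) * (s/d)^d ≤ Scount
  have stepB : (D.card : ℝ) * (s / d) ^ d ≤ (Scount : ℝ) := by
    rw [hScount]
    push_cast
    calc (D.card : ℝ) * (s / d) ^ d = ∑ _v ∈ D, (s / d) ^ d := by
          rw [Finset.sum_const, nsmul_eq_mul]
      _ ≤ ∑ v ∈ D, (((Nu ∩ Nb v).card.choose d : ℕ) : ℝ) := by
          apply Finset.sum_le_sum
          intro v hv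
          rw [hD, Finset.mem_filter] at hv
          have hsv : s ≤ ((Nu ∩ Nb v).card : ℝ) := hv.2.2
          have hdv : d ≤ (Nu ∩ Nb v).card := by
            have : (d : ℝ) ≤ ((Nu ∩ Nb v).card : ℝ) := hds.trans hsv
            exact_mod_cast this
          calc (s / d) ^ d ≤ (((Nu ∩ Nb v).card : ℝ) / d) ^ d := by
                gcongr
            _ ≤ _ := aux_pow_div_le_choose hdv
      _ = _ := by push_cast; ring
  -- Step C : (Nu.card.choose d : ℝ) ≤ (e * t / d)^d
  have stepC : ((Nu.card.choose d : ℕ) : ℝ) ≤ (Real.exp 1 * t / d) ^ d := by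
    have h1 : ((Nu.card.choose d : ℕ) : ℝ) ≤ ((Nu.card : ℝ)) ^ d / (Nat.factorial d : ℕ) := by
      have := Nat.choose_le_pow_div (α := ℝ) d Nu.card
      push_cast at this ⊢
      exact this
    have hNut : (Nu.card : ℝ) ≤ t := by
      have := hdeg u
      rw [← hNu] at this
      exact_mod_cast this.le
    have h2 : ((Nu.card : ℝ)) ^ d / (Nat.factorial d : ℕ) ≤ (t : ℝ) ^ d / (Nat.factorial d : ℕ) := by
      gcongr
    have h3 : (d : ℝ) ^ d / (Nat.factorial d : ℕ) ≤ Real.exp 1 ^ d := by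
      rw [Real.exp_one_pow]
      exact_mod_cast Real.pow_div_factorial_le_exp (x := (d:ℝ)) (by positivity) d
    have hfd : (0 : ℝ) < ((Nat.factorial d : ℕ) : ℝ) := by exact_mod_cast Nat.factorial_pos d
    have h4 : (t : ℝ) ^ d / (Nat.factorial d : ℕ) ≤ (Real.exp 1 * t / d) ^ d := by
      rw [div_pow, mul_pow]
      rw [div_le_div_iff₀ hfd (by positivity)]
      calc (t:ℝ)^d * d^d = (d^d / (Nat.factorial d : ℕ)) * (Nat.factorial d : ℕ) * t^d := by field_simp
        _ ≤ Real.exp 1 ^ d * (Nat.factorial d : ℕ) * t^d := by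
            apply mul_le_mul_of_nonneg_right ?_ (by positivity)
            exact mul_le_mul_of_nonneg_right h3 hfd.le
        _ = Real.exp 1 ^ d * t ^ d * (Nat.factorial d : ℕ) := by ring
    exact h1.trans (h2.trans h4)
  -- combine
  have hkey : (D.card : ℝ) * (s / d) ^ d ≤
      ((d : ℝ) - 1) * (Real.exp 1 * (k : ℝ) ^ 2 / ε) ^ d * (s / d) ^ d := by
    have hA : (Scount : ℝ) ≤ ((d : ℝ) - 1) * (Real.exp 1 * t / d) ^ d := by
      have : (Scount : ℝ) ≤ (Nu.card.choose d : ℕ) * ((d - 1 : ℕ) : ℝ) := by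
        exact_mod_cast Nat.cast_le.mpr stepA |>.trans_eq (by push_cast; ring)
      rw [Nat.cast_sub hd] at this
      calc (Scount : ℝ) ≤ (Nu.card.choose d : ℕ) * ((d : ℝ) - 1) := by
            simpa using this
        _ ≤ ((d : ℝ) - 1) * (Real.exp 1 * t / d) ^ d := by
            rw [mul_comm]
            apply mul_le_mul_of_nonneg_left stepC
            have : (1 : ℝ) ≤ d := by exact_mod_cast hd
            linarith
    have heq : (Real.exp 1 * t / d) ^ d =
        (Real.exp 1 * (k : ℝ) ^ 2 / ε) ^ d * (s / d) ^ d := by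
      rw [← mul_pow]
      congr 1
      rw [hs]
      field_simp
    rw [mul_assoc, ← heq]
    exact (stepB.trans hA)
  have hpos : (0 : ℝ) < (s / d) ^ d := by positivity
  exact le_of_mul_le_mul_right hkey hpos
end

section
/- Let d be a positive integer and let G be a finite bipartite graph with parts P and Q that is K_{d,d}-free. Then the number of copies of the star K_{1,d} in G with center in P and d leaves in Q satisfies Σ_{u∈P} C(deg(u), d) ≤ (d−1)·C(|Q|, d), where deg(u) is the number of neighbors of u in Q and C(·,·) denotes the binomial coefficient. -/
open Finset

open scoped Classical

/-- Star-counting bound in a `K_{d,d}`-free bipartite graph. -/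
theorem stmt_1 {P Q : Type*} [Fintype P] [Fintype Q]
    (d : ℕ) (hd : 0 < d) (Adj : P → Q → Prop)
    (hKdd : ¬ ∃ (S : Finset P) (T : Finset Q), S.card = d ∧ T.card = d ∧
      ∀ p ∈ S, ∀ q ∈ T, Adj p q) :
    ∑ u : P, ((univ.filter fun q => Adj u q).card).choose d ≤
      (d - 1) * (Fintype.card Q).choose d := by
  set N : P → Finset Q := fun u => univ.filter fun q => Adj u q with hN
  have key : ∀ u : P, ((N u).card).choose d =
      (((univ : Finset Q).powersetCard d).filter (fun T => T ⊆ N u)).card := by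
    intro u
    rw [← Finset.card_powersetCard]
    congr 1
    ext T
    simp [Finset.mem_powersetCard, and_comm]
  calc ∑ u : P, ((N u).card).choose d
      = ∑ u : P, (((univ : Finset Q).powersetCard d).filter (fun T => T ⊆ N u)).card := by
        simp_rw [key]
    _ = ∑ T ∈ (univ : Finset Q).powersetCard d,
          ((univ : Finset P).filter (fun u => T ⊆ N u)).card := by
        simp_rw [Finset.card_filter]
        rw [Finset.sum_comm]
    _ ≤ ∑ T ∈ (univ : Finset Q).powersetCard d, (d - 1) := by
        apply Finset.sum_le_sum
        intro T hT
        rw [Finset.mem_powersetCard] at hT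
        by_contra h
        push_neg at h
        have hge : d ≤ ((univ : Finset P).filter (fun u => T ⊆ N u)).card :=
          Nat.le_of_pred_lt h
        obtain ⟨S, hS, hScard⟩ := Finset.exists_subset_card_eq hge
        apply hKdd
        refine ⟨S, T, hScard, hT.2, ?_⟩
        intro p hp q hq
        have := hS hp
        rw [Finset.mem_filter] at this
        have := this.2 hq
        simpa [hN] using this
    _ = (d - 1) * (Fintype.card Q).choose d := by
        rw [Finset.sum_const, Finset.card_powersetCard, Finset.card_univ, smul_eq_mul,
          Nat.mul_comm]
end

section
/- Let T be a finite tree on n vertices and let q be a natural number. Then there exists a set X of vertices of T with |X| ≤ ⌈n/(q+1)⌉ such that every vertex of T is at distance at most q in T from some vertex of X. -/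
private lemma walk_split {V : Type*} {G : SimpleGraph V} :
    ∀ {r v : V} (p : G.Walk r v) (k : ℕ), k ≤ p.length →
      ∃ (w : V) (p1 : G.Walk r w) (p2 : G.Walk w v), p1.length = k ∧ p2.length = p.length - k := by
  intro r v p
  induction p with
  | nil =>
    intro k hk
    have hk0 : k = 0 := by simpa using hk
    subst hk0
    exact ⟨_, .nil, .nil, rfl, by simp⟩
  | @cons a b c h q ih =>
    intro k hk
    cases k with
    | zero => exact ⟨a, .nil, q.cons h, rfl, by simp⟩
    | succ k' =>
      obtain ⟨w, p1, p2, hw1, hw2⟩ := ih k' (by simpa using hk)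
      exact ⟨w, p1.cons h, p2, by simp [hw1], by simp [hw2]⟩
/-- Every tree on `n` vertices admits a distance-`q` cover of size at most `⌈n/(q+1)⌉`. -/
theorem stmt_2 {V : Type*} [Fintype V] (G : SimpleGraph V)
    (hconn : G.Connected) (hacyc : G.IsAcyclic) (q : ℕ) :
    ∃ X : Finset V, (X.card : ℤ) ≤ ⌈(Fintype.card V : ℚ) / (q + 1)⌉ ∧
      ∀ v : V, ∃ x ∈ X, G.dist v x ≤ q := by
  classical
  obtain ⟨r⟩ := hconn.nonempty
  set n := Fintype.card V with hn
  set N : ℤ := ⌈(n : ℚ) / (q + 1)⌉ with hNdef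
  -- key: intermediate points on shortest paths
  have key : ∀ (v : V) (k : ℕ), k ≤ G.dist r v →
      ∃ w, G.dist r w = k ∧ G.dist v w ≤ G.dist r v - k := by
    intro v k hk
    obtain ⟨p, hp⟩ := (hconn r v).exists_walk_length_eq_dist
    obtain ⟨w, p1, p2, hl1, hl2⟩ := walk_split p k (by omega)
    have hw1 : G.dist r w ≤ k := hl1 ▸ SimpleGraph.dist_le p1
    have hw2 : G.dist w v ≤ G.dist r v - k := by
      have := SimpleGraph.dist_le p2
      omega
    have htri : G.dist r v ≤ G.dist r w + G.dist w v :=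
      hconn.dist_triangle (u := r) (v := w) (w := v)
    have h1 : G.dist r w = k := by omega
    refine ⟨w, h1, ?_⟩
    rw [SimpleGraph.dist_comm]
    omega
  -- residue classes of depth
  set C : ℕ → Finset V := fun i => Finset.univ.filter (fun v => G.dist r v % (q+1) = i)
    with hC
  -- cover lemma
  have cover : ∀ i ≤ q, ∀ v : V, i ≤ G.dist r v → ∃ w ∈ C i, G.dist v w ≤ q := by
    intro i hi v hiv
    set d := G.dist r v with hd
    have hdk : (d - i) % (q+1) + (q+1) * ((d - i) / (q+1)) = d - i := Nat.mod_add_div _ _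
    have hmlt : (d - i) % (q+1) < q+1 := Nat.mod_lt _ (by omega)
    have hmod : (i + (q+1) * ((d - i) / (q+1))) % (q+1) = i := by
      rw [Nat.add_mul_mod_self_left, Nat.mod_eq_of_lt (by omega)]
    set P := (q+1) * ((d - i) / (q+1)) with hP
    have hkd : i + P ≤ d := by omega
    obtain ⟨w, hw1, hw2⟩ := key v (i + P) hkd
    refine ⟨w, ?_, by omega⟩
    simp only [hC, Finset.mem_filter, Finset.mem_univ, true_and]
    rw [hw1]; exact hmod
  -- sum of class sizes is n
  have hsum : ∑ i ∈ Finset.range (q+1), (C i).card = n := by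
    rw [hn, ← Finset.card_univ]
    simp only [hC]
    exact (Finset.card_eq_sum_card_fiberwise
      (f := fun v => G.dist r v % (q+1)) (s := Finset.univ) (t := Finset.range (q+1))
      (fun v _ => Finset.mem_range.mpr (Nat.mod_lt _ (by omega)))).symm
  -- n ≤ (q+1) * N
  have hnN : (n : ℤ) ≤ (q+1) * N := by
    have h1 : (n : ℚ) / (q + 1) ≤ (N : ℚ) := Int.le_ceil _
    have h2 : (n : ℚ) ≤ (q + 1) * N := by
      rw [div_le_iff₀ (by positivity)] at h1
      linarith
    exact_mod_cast h2
  by_cases h0 : ((C 0).card : ℤ) ≤ N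
  · refine ⟨C 0, h0, fun v => ?_⟩
    obtain ⟨w, hw, hwd⟩ := cover 0 (by omega) v (by omega)
    exact ⟨w, hw, hwd⟩
  · -- some other class is small
    have hsmall : ∃ i ∈ Finset.range (q+1), ((C i).card : ℤ) + 1 ≤ N := by
      by_contra hc
      push_neg at hc
      have hmem0 : (0:ℕ) ∈ Finset.range (q+1) := by simp
      have hsplit : ((C 0).card : ℤ) + ∑ i ∈ (Finset.range (q+1)).erase 0, ((C i).card : ℤ)
          = ∑ i ∈ Finset.range (q+1), ((C i).card : ℤ) :=
        Finset.add_sum_erase _ (fun i => ((C i).card : ℤ)) hmem0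
      have herase : ∀ i ∈ (Finset.range (q+1)).erase 0, N ≤ ((C i).card : ℤ) := by
        intro i hi
        have := hc i (Finset.mem_of_mem_erase hi)
        omega
      have hcard : ((Finset.range (q+1)).erase 0).card = q := by
        rw [Finset.card_erase_of_mem hmem0, Finset.card_range]
        omega
      have h4 : (q : ℤ) * N ≤ ∑ i ∈ (Finset.range (q+1)).erase 0, ((C i).card : ℤ) := by
        have := Finset.card_nsmul_le_sum ((Finset.range (q+1)).erase 0)
          (fun i => ((C i).card : ℤ)) N herase
        rwa [hcard, nsmul_eq_mul] at this
      have h5 : ∑ i ∈ Finset.range (q+1), ((C i).card : ℤ) = (n : ℤ) := by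
        rw [← hsum]; push_cast; ring
      have h6 : N + 1 ≤ ((C 0).card : ℤ) := by omega
      have : ((q : ℤ) + 1) * N + 1 ≤ (n : ℤ) := by
        rw [← h5, ← hsplit]; nlinarith
      omega
    obtain ⟨i, hi, hiN⟩ := hsmall
    have hiq : i ≤ q := by have := Finset.mem_range.mp hi; omega
    refine ⟨insert r (C i), ?_, ?_⟩
    · have := Finset.card_insert_le r (C i)
      have : ((insert r (C i)).card : ℤ) ≤ ((C i).card : ℤ) + 1 := by exact_mod_cast this
      omega
    · intro v
      by_cases hd : i ≤ G.dist r v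
      · obtain ⟨w, hw, hwd⟩ := cover i hiq v hd
        exact ⟨w, Finset.mem_insert_of_mem hw, hwd⟩
      · refine ⟨r, Finset.mem_insert_self _ _, ?_⟩
        rw [SimpleGraph.dist_comm]
        omega
end

section
/- Let G be a finite simple graph, let r and k be positive integers, and let S be a set of at most k vertices of G such that the induced subgraph G[S] is connected. Then there exists a subset C ⊆ S with |C| ≤ ⌈k/(r+1)⌉ such that every vertex of S is at distance at most r from some vertex of C, where distance is measured in the induced subgraph G[S]. -/
open SimpleGraph

private lemma aux_walk {V : Type*} {G : SimpleGraph V} (hc : G.Connected) (v : V) :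
    ∀ (ℓ : ℕ) (w : V) (p : G.Walk w v),
      ∃ u, G.dist w u ≤ ℓ ∧ G.dist u v ≤ p.length - ℓ := by
  intro ℓ
  induction ℓ with
  | zero =>
    intro w p
    exact ⟨w, by simp [SimpleGraph.dist_self], by simpa using SimpleGraph.dist_le p⟩
  | succ m ih =>
    intro w p
    by_cases hnil : p.Nil
    · have hlen : p.length = 0 := (Walk.nil_iff_length_eq.mp hnil)
      refine ⟨w, by simp [SimpleGraph.dist_self], ?_⟩
      have := SimpleGraph.dist_le p
      omega
    · set x := p.getVert 1 with hx
      have hadj : G.Adj w x := p.adj_snd hnil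
      have hlen : p.tail.length + 1 = p.length := Walk.length_tail_add_one hnil
      obtain ⟨u, h1, h2⟩ := ih x p.tail
      refine ⟨u, ?_, ?_⟩
      · have htri := hc.dist_triangle (u := w) (v := x) (w := u)
        have hwx : G.dist w x ≤ 1 := by simpa using SimpleGraph.dist_le hadj.toWalk
        omega
      · omega

private lemma aux_between {V : Type*} {G : SimpleGraph V} (hc : G.Connected) {w v : V}
    {ℓ : ℕ} (hℓ : ℓ ≤ G.dist w v) :
    ∃ u, G.dist w u = ℓ ∧ G.dist u v ≤ G.dist w v - ℓ := by
  obtain ⟨p, hp⟩ := hc.exists_walk_length_eq_dist w v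
  obtain ⟨u, h1, h2⟩ := aux_walk hc v ℓ w p
  rw [hp] at h2
  have htri := hc.dist_triangle (u := w) (v := u) (w := v)
  exact ⟨u, by omega, h2⟩

/-- Solution covering lemma: a connected set `S` of at most `k` vertices has a subset `C`
of size at most `⌈k/(r+1)⌉` so that every vertex of `S` is within distance `r` of `C`
inside the induced subgraph `G[S]`. -/
theorem stmt_3 {V : Type*} [Fintype V] (G : SimpleGraph V)
    (r k : ℕ) (hr : 0 < r) (hk : 0 < k)
    (S : Finset V) (hScard : S.card ≤ k)
    (hconn : (G.induce (S : Set V)).Connected) :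
    ∃ C : Finset V, C ⊆ S ∧ (C.card : ℤ) ≤ ⌈(k : ℚ) / (r + 1)⌉ ∧
      ∀ v : (S : Set V), ∃ c : (S : Set V), (c : V) ∈ C ∧
        (G.induce (S : Set V)).dist v c ≤ r := by
  classical
  set H := G.induce (S : Set V) with hH
  obtain ⟨w⟩ : Nonempty ↑(S : Set V) := hconn.nonempty
  set L : ℕ → Finset ↑(S : Set V) :=
    fun i => Finset.univ.filter (fun v => H.dist w v % (r + 1) = i) with hL
  set Cs : ℕ → Finset ↑(S : Set V) := fun i => insert w (L i) with hCs
  -- the levels partition the vertex set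
  have hsum : ∑ i ∈ Finset.range (r + 1), (L i).card = Fintype.card ↑(S : Set V) := by
    rw [← Finset.card_univ]
    exact (Finset.card_eq_sum_card_fiberwise
      (s := (Finset.univ : Finset ↑(S : Set V)))
      (f := fun v => H.dist w v % (r + 1)) (t := Finset.range (r + 1))
      (fun x _ => Finset.mem_range.mpr (Nat.mod_lt _ (by omega)))).symm
  have hcardS : Fintype.card ↑(S : Set V) = S.card := by
    simp [Fintype.card_coe]
  have hw0 : w ∈ L 0 := by
    simp [hL, SimpleGraph.dist_self]
  have hCs0 : (Cs 0).card = (L 0).card := by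
    rw [hCs]; simp [Finset.insert_eq_self.mpr hw0]
  have hCssum : ∑ i ∈ Finset.range (r + 1), (Cs i).card ≤ k + r := by
    have h1 : ∑ i ∈ Finset.range (r + 1), (Cs i).card
        ≤ (∑ i ∈ Finset.range (r + 1), (L i).card) + r := by
      rw [Finset.sum_range_succ' (fun i => (Cs i).card) r,
        Finset.sum_range_succ' (fun i => (L i).card) r, hCs0]
      have hle : ∑ i ∈ Finset.range r, (Cs (i + 1)).card
          ≤ ∑ i ∈ Finset.range r, ((L (i + 1)).card + 1) :=
        Finset.sum_le_sum (fun i _ => Finset.card_insert_le _ _)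
      rw [Finset.sum_add_distrib, Finset.sum_const, Finset.card_range,
        smul_eq_mul, mul_one] at hle
      omega
    rw [hsum, hcardS] at h1
    omega
  -- pick a small class
  obtain ⟨i, hir, hile⟩ : ∃ i ∈ Finset.range (r + 1), (r + 1) * (Cs i).card ≤ k + r := by
    by_contra hcon
    push_neg at hcon
    have h2 : ∀ i ∈ Finset.range (r + 1), k + r + 1 ≤ (r + 1) * (Cs i).card :=
      fun i hi => hcon i hi
    have h3 : (r + 1) * (k + r + 1) ≤ (r + 1) * ∑ i ∈ Finset.range (r + 1), (Cs i).card := by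
      rw [Finset.mul_sum]
      calc (r + 1) * (k + r + 1) = ∑ _i ∈ Finset.range (r + 1), (k + r + 1) := by
            rw [Finset.sum_const, Finset.card_range, smul_eq_mul]
        _ ≤ ∑ i ∈ Finset.range (r + 1), (r + 1) * (Cs i).card := Finset.sum_le_sum h2
    have h4 : (r + 1) * ∑ i ∈ Finset.range (r + 1), (Cs i).card ≤ (r + 1) * (k + r) :=
      Nat.mul_le_mul_left _ hCssum
    have := h3.trans h4
    nlinarith
  have hir' : i ≤ r := by
    have := Finset.mem_range.mp hir; omega
  refine ⟨(Cs i).image Subtype.val, ?_, ?_, ?_⟩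
  · intro x hx
    obtain ⟨u, _, rfl⟩ := Finset.mem_image.mp hx
    exact u.2
  · -- cardinality bound
    have hcard : ((Cs i).image Subtype.val).card ≤ (Cs i).card :=
      Finset.card_image_le
    set m := (Cs i).card with hm
    have key : (m : ℤ) ≤ ⌈(k : ℚ) / (r + 1)⌉ := by
      have hlt : ((m : ℤ) - 1) < ⌈(k : ℚ) / (r + 1)⌉ := by
        rw [Int.lt_ceil]
        rw [lt_div_iff₀ (by positivity : (0 : ℚ) < (r : ℚ) + 1)]
        have hcast : ((r : ℚ) + 1) * m ≤ (k : ℚ) + r := by exact_mod_cast hile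
        push_cast
        nlinarith [hcast, (by positivity : (0:ℚ) < (r:ℚ) + 1)]
      omega
    calc (((Cs i).image Subtype.val).card : ℤ) ≤ (m : ℤ) := by exact_mod_cast hcard
      _ ≤ _ := key
  · -- covering
    intro v
    by_cases hcase : i ≤ H.dist w v
    · -- find a vertex at level ≡ i (mod r+1) within distance r of v
      obtain ⟨ℓ, hℓmod, hℓle, hdiff⟩ :
          ∃ ℓ, ℓ % (r + 1) = i ∧ ℓ ≤ H.dist w v ∧ H.dist w v - ℓ ≤ r := by
        refine ⟨i + (r + 1) * ((H.dist w v - i) / (r + 1)), ?_, ?_, ?_⟩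
        · rw [Nat.add_mul_mod_self_left, Nat.mod_eq_of_lt (by omega)]
        · have hmod := Nat.div_add_mod (H.dist w v - i) (r + 1)
          omega
        · have hmod := Nat.div_add_mod (H.dist w v - i) (r + 1)
          have hmodlt : (H.dist w v - i) % (r + 1) < r + 1 := Nat.mod_lt _ (by omega)
          omega
      obtain ⟨u, hu1, hu2⟩ := aux_between hconn (w := w) (v := v) hℓle
      refine ⟨u, ?_, ?_⟩
      · apply Finset.mem_image_of_mem
        apply Finset.mem_insert_of_mem
        rw [hL]
        refine Finset.mem_filter.mpr ⟨Finset.mem_univ _, ?_⟩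
        rw [hu1, hℓmod]
      · rw [SimpleGraph.dist_comm]
        omega
    · -- v is close to the root w
      push_neg at hcase
      refine ⟨w, ?_, ?_⟩
      · exact Finset.mem_image_of_mem _ (Finset.mem_insert_self _ _)
      · rw [SimpleGraph.dist_comm]
        omega
end

section
/- Let ε > 0 be a real number and let k ≥ 1 and t ≥ 0 be integers. Let G_cov be a finite bipartite graph with parts R and B, and let H be a spanning subgraph of G_cov. Let C_1, …, C_s be pairwise disjoint sets whose union is R, and assume: (a) every vertex b ∈ B has at most one H-neighbor in each C_i; and (b) for all i ≠ j and all x ∈ C_i, y ∈ C_j, |N_H(x) ∩ N_H(y)| < ε·t/k². Then for every Y ⊆ R with |Y| ≤ k, |N_{G_cov}(Y)| ≥ |N_H(Y)| and, as real numbers, |N_H(Y)| ≥ (Σ_{y∈Y} deg_H(y)) − ε·t. -/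
open Finset

open scoped Classical

/-- Lower bound on the coverage of any small set `Y` via the degrees in a sparsified graph. -/
theorem stmt_4 {R B : Type*} [Fintype R] [Fintype B]
    (ε : ℝ) (hε : 0 < ε) (k t : ℕ) (hk : 1 ≤ k)
    (Adj HAdj : R → B → Prop)
    (hsub : ∀ r b, HAdj r b → Adj r b)
    {ι : Type*} [Fintype ι] (C : ι → Finset R)
    (hdisj : ∀ i j, i ≠ j → Disjoint (C i) (C j))
    (hunion : ∀ r : R, ∃ i, r ∈ C i)
    (ha : ∀ b : B, ∀ i, ((C i).filter fun r => HAdj r b).card ≤ 1)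
    (hb : ∀ i j, i ≠ j → ∀ x ∈ C i, ∀ y ∈ C j,
      (((univ.filter fun b => HAdj x b) ∩ (univ.filter fun b => HAdj y b)).card : ℝ)
        < ε * t / (k : ℝ) ^ 2) :
    ∀ Y : Finset R, Y.card ≤ k →
      (univ.filter fun b => ∃ y ∈ Y, HAdj y b).card ≤
        (univ.filter fun b => ∃ y ∈ Y, Adj y b).card ∧
      (∑ y ∈ Y, ((univ.filter fun b => HAdj y b).card : ℝ)) - ε * t ≤
        ((univ.filter fun b => ∃ y ∈ Y, HAdj y b).card : ℝ) := by
  have hk0 : (0:ℝ) < (k:ℝ) := by exact_mod_cast hk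
  set δ : ℝ := ε * t / (k:ℝ)^2 with hδ
  have hδ0 : 0 ≤ δ := by positivity
  -- pairwise intersection bound
  have key : ∀ a y : R, a ≠ y →
      (((univ.filter fun b => HAdj a b) ∩ (univ.filter fun b => HAdj y b)).card : ℝ) ≤ δ := by
    intro a y hne
    obtain ⟨i, hai⟩ := hunion a
    obtain ⟨j, hyj⟩ := hunion y
    by_cases hij : i = j
    · subst hij
      have hempty : ((univ.filter fun b => HAdj a b) ∩ (univ.filter fun b => HAdj y b)) = ∅ := by
        rw [Finset.eq_empty_iff_forall_notMem]
        intro b hbmem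
        simp only [mem_inter, mem_filter, mem_univ, true_and] at hbmem
        have hsubs : ({a, y} : Finset R) ⊆ (C i).filter fun r => HAdj r b := by
          intro z hz
          simp only [mem_insert, mem_singleton] at hz
          rcases hz with rfl | rfl <;> simp [mem_filter, hai, hyj, hbmem.1, hbmem.2]
        have h2 : ({a, y} : Finset R).card = 2 := Finset.card_pair hne
        have h3 := Finset.card_le_card hsubs
        have h4 := ha b i
        omega
      rw [hempty]
      simpa using hδ0
    · exact (hb i j hij a hai y hyj).le
  -- main induction
  have main : ∀ Y : Finset R,
      (∑ y ∈ Y, ((univ.filter fun b => HAdj y b).card : ℝ)) ≤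
        ((univ.filter fun b => ∃ y ∈ Y, HAdj y b).card : ℝ) + (Y.card.choose 2 : ℕ) * δ := by
    intro Y
    induction Y using Finset.induction_on with
    | empty => simp
    | @insert a Y hna ih =>
      have hUeq : (univ.filter fun b => ∃ y ∈ insert a Y, HAdj y b) =
          (univ.filter fun b => HAdj a b) ∪ (univ.filter fun b => ∃ y ∈ Y, HAdj y b) := by
        ext b; simp [or_and_right, exists_or]
      set A := (univ.filter fun b => HAdj a b) with hA
      set U := (univ.filter fun b => ∃ y ∈ Y, HAdj y b) with hU
      have hcardu : ((A ∪ U).card : ℝ) = (A.card : ℝ) + U.card - (A ∩ U).card := by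
        have := Finset.card_union_add_card_inter A U
        have : ((A ∪ U).card : ℝ) + (A ∩ U).card = A.card + U.card := by exact_mod_cast this
        linarith
      have hAU : ((A ∩ U).card : ℝ) ≤ Y.card * δ := by
        have hsubs : A ∩ U ⊆ Y.biUnion (fun y => A ∩ (univ.filter fun b => HAdj y b)) := by
          intro b hbmem
          simp only [hA, hU, mem_inter, mem_filter, mem_univ, true_and, mem_biUnion] at hbmem ⊢
          obtain ⟨h1, y, hy, h2⟩ := hbmem
          exact ⟨y, hy, h1, h2⟩
        calc ((A ∩ U).card : ℝ) ≤ ((Y.biUnion fun y => A ∩ (univ.filter fun b => HAdj y b)).card : ℝ) := by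
              exact_mod_cast Finset.card_le_card hsubs
          _ ≤ ∑ y ∈ Y, ((A ∩ (univ.filter fun b => HAdj y b)).card : ℝ) := by
              exact_mod_cast Finset.card_biUnion_le
          _ ≤ ∑ y ∈ Y, δ := by
              apply Finset.sum_le_sum
              intro y hy
              exact key a y (fun h => hna (h ▸ hy))
          _ = Y.card * δ := by rw [Finset.sum_const, nsmul_eq_mul]
      have hchoose : ((insert a Y).card.choose 2 : ℕ) = Y.card.choose 2 + Y.card := by
        rw [Finset.card_insert_of_notMem hna]
        simp [Nat.choose_succ_succ, Nat.choose_one_right, Nat.choose]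
        omega
      rw [Finset.sum_insert hna, hUeq, hchoose, hcardu]
      push_cast
      linarith
  intro Y hY
  constructor
  · apply Finset.card_le_card
    intro b hbmem
    simp only [mem_filter, mem_univ, true_and] at hbmem ⊢
    obtain ⟨y, hy, h⟩ := hbmem
    exact ⟨y, hy, hsub y b h⟩
  · have h1 := main Y
    have h2 : (Y.card.choose 2 : ℝ) * δ ≤ ε * t := by
      have hc : Y.card.choose 2 ≤ k ^ 2 := by
        have : Y.card.choose 2 ≤ Y.card * (Y.card - 1) := by
          rw [Nat.choose_two_right]
          exact Nat.div_le_self _ _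
        have h3 : Y.card * (Y.card - 1) ≤ k * k := by
          exact Nat.mul_le_mul hY (le_trans (Nat.sub_le _ _) hY)
        calc Y.card.choose 2 ≤ Y.card * (Y.card - 1) := this
          _ ≤ k * k := h3
          _ = k ^ 2 := (sq k).symm
      have hδk : (k:ℝ)^2 * δ = ε * t := by
        rw [hδ]; field_simp
      calc (Y.card.choose 2 : ℝ) * δ ≤ ((k:ℝ)^2) * δ := by
            apply mul_le_mul_of_nonneg_right _ hδ0
            exact_mod_cast hc
        _ = ε * t := hδk
    linarith
end

section
/- Let d, ℓ, t' be positive integers with t' ≥ 4ℓ²d. Let G be a finite bipartite graph with parts A and B that is K_{d,d}-free. Let S' ⊆ A with |S'| = ℓ and |N(S')| ≥ t'·(1 − 1/(4ℓ)). Let H ⊆ A be a set of ℓ(d−1)(ℓ²)^{d−1} + 1 highest-degree vertices of A, i.e., |H| = ℓ(d−1)(ℓ²)^{d−1} + 1 and deg(h) ≥ deg(a) for every h ∈ H and every a ∈ A \ H. Then for every S ⊆ A with |S| = ℓ and |N(S)| ≥ t', either S ∩ H ≠ ∅, or there exists a vertex x ∈ H such that |N(S' ∪ {x})| ≥ t'.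 -/
/-!
Suppose no `x ∈ H` works. As `S` avoids `H`, every `x ∈ H` has degree at least the largest degree
in `S`, hence at least `t' / ℓ`; since `|N(S')| ≥ (1 - 1/(4ℓ)) t'` while `|N(S' ∪ {x})| < t'`, each
`x ∈ H` has more than `3t' / (4ℓ)` neighbours inside `N(S')`. By `K_{d,d}`-freeness a `d`-subset of
`N(S')` lies in `N(x)` for at most `d - 1` vertices `x ∈ H`, so double counting gives
`|H| · C(m, d) ≤ (d - 1) · C(|N(S')|, d)`, where `m` is the least such number of neighbours. But
`|N(S')| < t'` and `m > 3t' / (4ℓ)` force `C(|N(S')|, d) ≤ ℓ (ℓ²)^(d-1) C(m, d)` (for `ℓ, d ≥ 2`;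
`ℓ = 1` is immediate from the degree bound and `d = 1` from the double count), contradicting
`|H| = ℓ (d - 1) (ℓ²)^(d-1) + 1`.
-/

open Finset

open scoped Classical

section Numerics

lemma choose_le_mul_choose_of_pow_le {d X n M : ℕ} (h : n ^ d ≤ X * (M + 1 - d) ^ d) :
    n.choose d ≤ X * M.choose d := by
  refine Nat.le_of_mul_le_mul_left ?_ d.factorial_pos
  calc d.factorial * n.choose d = n.descFactorial d :=
        (n.descFactorial_eq_factorial_mul_choose d).symm
    _ ≤ n ^ d := n.descFactorial_le_pow d
    _ ≤ X * (M + 1 - d) ^ d := h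
    _ ≤ X * M.descFactorial d := Nat.mul_le_mul_left X (M.pow_sub_le_descFactorial d)
    _ = d.factorial * (X * M.choose d) := by rw [M.descFactorial_eq_factorial_mul_choose]; ring

lemma mul_pow_le_add_sub_one_pow {L : ℝ} (hL : 1 ≤ L) {d : ℕ} (hd : 0 < d) :
    L * (d : ℝ) ^ d ≤ (d + L - 1) ^ d := by
  have hd' : (0 : ℝ) < d := by exact_mod_cast hd
  have hbern : 1 + d * ((L - 1) / d) ≤ (1 + (L - 1) / d) ^ d :=
    one_add_mul_le_pow (by linarith [div_nonneg (by linarith : (0 : ℝ) ≤ L - 1) hd'.le]) d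
  rw [mul_div_cancel₀ _ hd'.ne'] at hbern
  calc L * (d : ℝ) ^ d ≤ (1 + (L - 1) / d) ^ d * (d : ℝ) ^ d := by gcongr; linarith
    _ = (d + L - 1) ^ d := by rw [← mul_pow]; congr 1; field_simp; ring

lemma four_mul_sq_mul_pow_le {L : ℝ} (hL : 2 ≤ L) {d : ℕ} (hd : 2 ≤ d) :
    (4 * L ^ 2 * d) ^ d ≤ L * (L ^ 2) ^ (d - 1) * ((3 * L - 1) * d + 2) ^ d := by
  have hd' : (2 : ℝ) ≤ d := by exact_mod_cast hd
  have hlin : 4 * (d + L - 1) ≤ (3 * L - 1) * d + 2 := by nlinarith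
  calc (4 * L ^ 2 * d) ^ d = L * (L ^ 2) ^ (d - 1) * 4 ^ d * (L * (d : ℝ) ^ d) := by
        rw [mul_pow, mul_pow, ← pow_mul, ← pow_mul]
        obtain ⟨k, rfl⟩ := Nat.exists_eq_add_of_le' (by omega : 1 ≤ d)
        simp only [Nat.add_sub_cancel]; ring
    _ ≤ L * (L ^ 2) ^ (d - 1) * 4 ^ d * (d + L - 1) ^ d := by
        gcongr; exact mul_pow_le_add_sub_one_pow (by linarith) (by omega)
    _ = L * (L ^ 2) ^ (d - 1) * (4 * (d + L - 1)) ^ d := by rw [mul_pow]; ring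
    _ ≤ L * (L ^ 2) ^ (d - 1) * ((3 * L - 1) * d + 2) ^ d := by
        gcongr; linarith

lemma pow_le_mul_sq_pow_mul_add_one_sub_pow {L T M N : ℝ} {d : ℕ} (hL : 2 ≤ L) (hd : 2 ≤ d)
    (hT : 4 * L ^ 2 * d ≤ T) (hM : 3 * T + 4 * L ≤ 4 * L * M) (hN : 0 ≤ N) (hNT : N ≤ T) :
    N ^ d ≤ L * (L ^ 2) ^ (d - 1) * (M + 1 - d) ^ d := by
  have hd' : (2 : ℝ) ≤ d := by exact_mod_cast hd
  -- `T / (M + 1 - d) ≤ 4L²d / c`, and `four_mul_sq_mul_pow_le` bounds `(4L²d / c)^d`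
  set c : ℝ := (3 * L - 1) * d + 2
  have hc : 0 ≤ c := by nlinarith
  have hratio : c * T ≤ 4 * L ^ 2 * d * (M + 1 - d) := by
    nlinarith [mul_nonneg (mul_nonneg (by linarith : (0 : ℝ) ≤ L) (by linarith : (0 : ℝ) ≤ d))
      (by linarith : (0 : ℝ) ≤ 4 * L * M - 3 * T - 4 * L),
      mul_nonneg (by linarith : (0 : ℝ) ≤ d - 2) (by linarith : (0 : ℝ) ≤ T - 4 * L ^ 2 * d)]
  have hK : 0 < 4 * L ^ 2 * d := by positivity
  refine le_of_mul_le_mul_left ?_ (pow_pos hK d)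
  calc (4 * L ^ 2 * d) ^ d * N ^ d ≤ (4 * L ^ 2 * d) ^ d * T ^ d := by gcongr
    _ ≤ L * (L ^ 2) ^ (d - 1) * c ^ d * T ^ d := by
        exact mul_le_mul_of_nonneg_right (four_mul_sq_mul_pow_le hL hd)
          (pow_nonneg (hK.le.trans hT) d)
    _ = L * (L ^ 2) ^ (d - 1) * (c * T) ^ d := by rw [mul_pow]; ring
    _ ≤ L * (L ^ 2) ^ (d - 1) * (4 * L ^ 2 * d * (M + 1 - d)) ^ d := by
        gcongr; nlinarith
    _ = (4 * L ^ 2 * d) ^ d * (L * (L ^ 2) ^ (d - 1) * (M + 1 - d) ^ d) := by rw [mul_pow]; ring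

lemma choose_le_mul_sq_pow_mul_choose {ℓ d t' M n : ℕ} (hℓ : 2 ≤ ℓ) (hd : 2 ≤ d)
    (ht' : 4 * ℓ ^ 2 * d ≤ t') (hM : 3 * t' + 4 * ℓ ≤ 4 * ℓ * M) (hdM : d ≤ M) (hn : n ≤ t') :
    n.choose d ≤ ℓ * (ℓ ^ 2) ^ (d - 1) * M.choose d := by
  refine choose_le_mul_choose_of_pow_le ?_
  have hR := pow_le_mul_sq_pow_mul_add_one_sub_pow (L := ℓ) (T := t') (M := M) (N := n)
    (by exact_mod_cast hℓ) hd (by exact_mod_cast ht') (by exact_mod_cast hM) (by positivity)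
    (by exact_mod_cast hn)
  have hcast : ((M + 1 - d : ℕ) : ℝ) = M + 1 - d := by
    push_cast [Nat.cast_sub (by omega : d ≤ M + 1)]; ring
  rw [← hcast] at hR
  exact_mod_cast hR

end Numerics

section Bipartite

variable {A B : Type*} [Fintype B] (Adj : A → B → Prop)

noncomputable def nbr (a : A) : Finset B := univ.filter fun b => Adj a b

noncomputable def nbhd (S : Finset A) : Finset B := univ.filter fun b => ∃ a ∈ S, Adj a b

def IsBicliqueFree (d : ℕ) : Prop :=
  ¬ ∃ (S : Finset A) (T : Finset B), S.card = d ∧ T.card = d ∧ ∀ a ∈ S, ∀ b ∈ T, Adj a b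

lemma nbhd_eq_biUnion (S : Finset A) : nbhd Adj S = S.biUnion (nbr Adj) := by
  ext b; simp [nbhd, nbr]

lemma nbhd_insert [DecidableEq A] (x : A) (S : Finset A) :
    nbhd Adj (insert x S) = nbr Adj x ∪ nbhd Adj S := by
  simp only [nbhd_eq_biUnion, biUnion_insert]

lemma card_nbhd_le_card_mul {S : Finset A} {k : ℕ} (h : ∀ a ∈ S, #(nbr Adj a) ≤ k) :
    #(nbhd Adj S) ≤ #S * k := by
  rw [nbhd_eq_biUnion]
  exact card_biUnion_le.trans (sum_le_card_nsmul _ _ _ h)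

/-- Each `d`-subset of `U` lies in the neighbourhoods of at most `d - 1` vertices of `H`. -/
lemma sum_choose_card_nbr_inter_le {d : ℕ} (hK : IsBicliqueFree Adj d) (H : Finset A)
    (U : Finset B) : ∑ h ∈ H, (#(nbr Adj h ∩ U)).choose d ≤ (#U).choose d * (d - 1) := by
  let R : A → Finset B → Prop := fun h T => T ⊆ nbr Adj h
  have hcount : ∀ T ∈ U.powersetCard d, #(H.bipartiteBelow R T) ≤ d - 1 := by
    intro T hT
    by_contra! hlarge
    obtain ⟨H₀, hH₀, hH₀card⟩ := exists_subset_card_eq (s := H.bipartiteBelow R T) (n := d)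
      (by omega)
    refine hK ⟨H₀, T, hH₀card, (mem_powersetCard.mp hT).2, fun a ha b hb => ?_⟩
    simpa [nbr] using (mem_bipartiteBelow R |>.mp (hH₀ ha)).2 hb
  calc ∑ h ∈ H, (#(nbr Adj h ∩ U)).choose d
        = ∑ h ∈ H, #((U.powersetCard d).bipartiteAbove R h) := by
          refine sum_congr rfl fun h _ => ?_
          rw [← card_powersetCard, bipartiteAbove]
          congr 1; ext T
          simp only [mem_powersetCard, mem_filter, subset_inter_iff, R]; tauto
    _ = ∑ T ∈ U.powersetCard d, #(H.bipartiteBelow R T) :=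
          sum_card_bipartiteAbove_eq_sum_card_bipartiteBelow R
    _ ≤ ∑ _T ∈ U.powersetCard d, (d - 1) := sum_le_sum hcount
    _ = (#U).choose d * (d - 1) := by rw [sum_const, card_powersetCard, smul_eq_mul]

theorem exists_mem_le_card_nbhd_insert [DecidableEq A] {d ℓ t' : ℕ}
    (hK : IsBicliqueFree Adj d) (hd : 0 < d) (hℓ : 2 ≤ ℓ) (ht' : 4 * ℓ ^ 2 * d ≤ t')
    {S' : Finset A} (hcov : 4 * ℓ * t' ≤ 4 * ℓ * #(nbhd Adj S') + t')
    {H : Finset A} (hH : #H = ℓ * (d - 1) * (ℓ ^ 2) ^ (d - 1) + 1)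
    (hdeg : ∀ h ∈ H, t' ≤ ℓ * #(nbr Adj h)) :
    ∃ x ∈ H, t' ≤ #(nbhd Adj (insert x S')) := by
  by_contra! hsmall
  simp only [nbhd_insert] at hsmall
  set n := #(nbhd Adj S')
  have hHne : H.Nonempty := card_pos.mp (by omega)
  have hn : n < t' := by
    obtain ⟨h, hh⟩ := hHne
    exact (card_le_card subset_union_right).trans_lt (hsmall h hh)
  have hcommon : ∀ h ∈ H, 3 * t' + 4 * ℓ ≤ 4 * ℓ * #(nbr Adj h ∩ nbhd Adj S') := by
    intro h hh
    have := card_union_add_card_inter (nbr Adj h) (nbhd Adj S')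
    have := hsmall h hh
    have := hdeg h hh
    nlinarith
  obtain ⟨h₀, hh₀, hmin⟩ := exists_min_image H (fun h => #(nbr Adj h ∩ nbhd Adj S')) hHne
  set M := #(nbr Adj h₀ ∩ nbhd Adj S')
  have hdM : d ≤ M := by
    have : ℓ * d ≤ ℓ * M := by nlinarith [hcommon h₀ hh₀]
    exact Nat.le_of_mul_le_mul_left this (by omega)
  have hdouble : #H * M.choose d ≤ n.choose d * (d - 1) :=
    (card_nsmul_le_sum H _ _ fun h hh => Nat.choose_le_choose d (hmin h hh)).trans
      (sum_choose_card_nbr_inter_le Adj hK H _)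
  have hMpos : 0 < M.choose d := Nat.choose_pos hdM
  obtain rfl | hd2 : d = 1 ∨ 2 ≤ d := by omega
  · simp only [Nat.sub_self, mul_zero] at hdouble
    exact absurd hdouble (Nat.mul_pos (card_pos.mpr hHne) hMpos).not_ge
  · have := Nat.mul_le_mul_right (d - 1)
      (choose_le_mul_sq_pow_mul_choose hℓ hd2 ht' (hcommon h₀ hh₀) hdM hn.le)
    rw [hH] at hdouble
    nlinarith

end Bipartite

theorem stmt_8_general {A B : Type*} [Fintype B] [DecidableEq A]
    (d ℓ t' : ℕ) (hd : 0 < d) (hℓ : 0 < ℓ)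
    (ht' : 4 * ℓ ^ 2 * d ≤ t')
    (Adj : A → B → Prop)
    (hKdd : ¬ ∃ (S : Finset A) (T : Finset B), S.card = d ∧ T.card = d ∧
      ∀ a ∈ S, ∀ b ∈ T, Adj a b)
    (S' : Finset A)
    (hcov : (t' : ℝ) * (1 - 1 / (4 * (ℓ : ℝ))) ≤
      ((univ.filter fun b => ∃ a ∈ S', Adj a b).card : ℝ))
    (H : Finset A) (hHcard : H.card = ℓ * (d - 1) * (ℓ ^ 2) ^ (d - 1) + 1)
    (hHdeg : ∀ h ∈ H, ∀ a : A, a ∉ H →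
      (univ.filter fun b => Adj a b).card ≤ (univ.filter fun b => Adj h b).card) :
    ∀ S : Finset A, S.card = ℓ → t' ≤ (univ.filter fun b => ∃ a ∈ S, Adj a b).card →
      (S ∩ H).Nonempty ∨
        ∃ x ∈ H, t' ≤ (univ.filter fun b => ∃ a ∈ insert x S', Adj a b).card := by
  change (t' : ℝ) * _ ≤ (#(nbhd Adj S') : ℝ) at hcov
  change ∀ h ∈ H, ∀ a : A, a ∉ H → #(nbr Adj a) ≤ #(nbr Adj h) at hHdeg
  show ∀ S : Finset A, #S = ℓ → t' ≤ #(nbhd Adj S) →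
    (S ∩ H).Nonempty ∨ ∃ x ∈ H, t' ≤ #(nbhd Adj (insert x S'))
  intro S hScard hScov
  rw [or_iff_not_imp_left, not_nonempty_iff_eq_empty, ← disjoint_iff_inter_eq_empty]
  intro hSH
  have hdegH : ∀ h ∈ H, t' ≤ ℓ * #(nbr Adj h) := fun h hh =>
    hScov.trans <| hScard ▸ card_nbhd_le_card_mul Adj fun a ha =>
      hHdeg h hh a (disjoint_left.mp hSH ha)
  obtain rfl | hℓ2 : ℓ = 1 ∨ 2 ≤ ℓ := by omega
  · obtain ⟨h, hh⟩ : H.Nonempty := card_pos.mp (by omega)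
    refine ⟨h, hh, (one_mul #(nbr Adj h) ▸ hdegH h hh).trans ?_⟩
    rw [nbhd_insert]
    exact card_le_card subset_union_left
  have hcovℕ : 4 * ℓ * t' ≤ 4 * ℓ * #(nbhd Adj S') + t' := by
    have hℓR : (0 : ℝ) < ℓ := by exact_mod_cast hℓ
    have : (t' : ℝ) * (1 - 1 / (4 * ℓ)) * (4 * ℓ) = 4 * ℓ * t' - t' := by field_simp
    have : (4 * ℓ * t' : ℝ) ≤ 4 * ℓ * #(nbhd Adj S') + t' := by nlinarith
    exact_mod_cast this
  exact exists_mem_le_card_nbhd_insert Adj hKdd hd hℓ2 ht' hcovℕ hHcard hdegH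

/-- Jain et al. style augmentation lemma for `K_{d,d}`-free bipartite graphs. -/
theorem stmt_8 {A B : Type*} [Fintype A] [Fintype B] [DecidableEq A]
    (d ℓ t' : ℕ) (hd : 0 < d) (hℓ : 0 < ℓ) (ht'pos : 0 < t')
    (ht' : 4 * ℓ ^ 2 * d ≤ t')
    (Adj : A → B → Prop)
    (hKdd : ¬ ∃ (S : Finset A) (T : Finset B), S.card = d ∧ T.card = d ∧
      ∀ a ∈ S, ∀ b ∈ T, Adj a b)
    (S' : Finset A) (hS' : S'.card = ℓ)
    (hcov : (t' : ℝ) * (1 - 1 / (4 * (ℓ : ℝ))) ≤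
      ((univ.filter fun b => ∃ a ∈ S', Adj a b).card : ℝ))
    (H : Finset A) (hHcard : H.card = ℓ * (d - 1) * (ℓ ^ 2) ^ (d - 1) + 1)
    (hHdeg : ∀ h ∈ H, ∀ a : A, a ∉ H →
      (univ.filter fun b => Adj a b).card ≤ (univ.filter fun b => Adj h b).card) :
    ∀ S : Finset A, S.card = ℓ → t' ≤ (univ.filter fun b => ∃ a ∈ S, Adj a b).card →
      (S ∩ H).Nonempty ∨
        ∃ x ∈ H, t' ≤ (univ.filter fun b => ∃ a ∈ insert x S', Adj a b).card :=
  stmt_8_general d ℓ t' hd hℓ ht' Adj hKdd S' hcov H hHcard hHdeg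
end

section
/- Let G be a finite simple graph with n vertices and m edges, and let k and t be natural numbers. Let G' be the graph obtained from G by adding one new vertex z adjacent to every vertex of G, and adding m further new vertices each adjacent only to z. Then G has a set S of at most k vertices covering at least t edges of G if and only if G' has a set S' of at most k+1 vertices such that the induced subgraph G'[S'] is connected and S' covers at least m+n+t edges of G'. -/
open Set

def stmt9Graph {V : Type*} (G : SimpleGraph V) (m : ℕ) :
    SimpleGraph (V ⊕ Unit ⊕ Fin m) :=
  SimpleGraph.fromRel (fun x y =>
    match x, y with
    | Sum.inl u, Sum.inl v => G.Adj u v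
    | Sum.inl _, Sum.inr (Sum.inl _) => True
    | Sum.inr (Sum.inl _), Sum.inr (Sum.inr _) => True
    | _, _ => False)

set_option linter.unusedSectionVars false
set_option linter.unnecessarySimpa false
namespace Stmt9Aux

variable {V : Type*} {G : SimpleGraph V} {m : ℕ}

abbrev s9z (V : Type*) (m : ℕ) : V ⊕ Unit ⊕ Fin m := Sum.inr (Sum.inl ())

lemma adj_inl_inl {u v : V} : (stmt9Graph G m).Adj (.inl u) (.inl v) ↔ G.Adj u v := by
  simp only [stmt9Graph, SimpleGraph.fromRel_adj, ne_eq, Sum.inl.injEq]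
  constructor
  · rintro ⟨h, h1 | h1⟩ <;> [exact h1; exact h1.symm]
  · exact fun h => ⟨fun e => G.irrefl (e ▸ h), Or.inl h⟩

lemma adj_inl_z {u : V} : (stmt9Graph G m).Adj (.inl u) (s9z V m) := by
  simp [stmt9Graph, SimpleGraph.fromRel_adj]

lemma adj_z_pend {i : Fin m} : (stmt9Graph G m).Adj (s9z V m) (.inr (.inr i)) := by
  simp [stmt9Graph, SimpleGraph.fromRel_adj]

lemma adj_pend {i : Fin m} {x} (h : (stmt9Graph G m).Adj (.inr (.inr i)) x) : x = s9z V m := by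
  rcases x with u | u | j <;> simp [stmt9Graph, SimpleGraph.fromRel_adj] at h ⊢

lemma notmem_A {e : Sym2 (V ⊕ Unit ⊕ Fin m)} (a : Unit ⊕ Fin m) (ha : Sum.inr a ∈ e) :
    e ∉ Sym2.map Sum.inl '' G.edgeSet := by
  rintro ⟨e', _, rfl⟩
  rcases Sym2.mem_map.1 ha with ⟨b, _, hb⟩
  simp at hb

lemma edgeSet_eq (G : SimpleGraph V) (m : ℕ) :
    (stmt9Graph G m).edgeSet =
      (Sym2.map Sum.inl '' G.edgeSet) ∪
      ((fun v : V => s(Sum.inl v, s9z V m)) '' Set.univ) ∪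
      ((fun i : Fin m => s(s9z V m, Sum.inr (Sum.inr i))) '' Set.univ) := by
  have hinj := Sym2.map.injective (f := (Sum.inl : V → V ⊕ Unit ⊕ Fin m)) Sum.inl_injective
  ext e
  induction e using Sym2.ind with
  | _ x y =>
    have hA : ∀ a b : V, (s(Sum.inl a, (Sum.inl b : V ⊕ Unit ⊕ Fin m)) ∈
        Sym2.map Sum.inl '' G.edgeSet) ↔ G.Adj a b := fun a b => by
      rw [← Sym2.map_pair_eq, hinj.mem_set_image, SimpleGraph.mem_edgeSet]
    rcases x with u | ⟨⟩ | i <;> rcases y with v | ⟨⟩ | j <;>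
      simp [SimpleGraph.mem_edgeSet, adj_inl_inl, hA, notmem_A, stmt9Graph,
        SimpleGraph.fromRel_adj, Sym2.eq, Sym2.rel_iff']
    · constructor
      · rintro ⟨h, h1 | h1⟩ <;> [exact h1; exact h1.symm]
      · exact fun h => ⟨G.ne_of_adj h, Or.inl h⟩
    all_goals
      intro e' he' hmap
      first
      | exact notmem_A (G := G) _ (Sym2.mem_mk_left _ _) ⟨e', he', hmap⟩
      | exact notmem_A (G := G) _ (Sym2.mem_mk_right _ _) ⟨e', he', hmap⟩

lemma B_inj : Function.Injective (fun v : V => s(Sum.inl v, s9z V m)) := by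
  intro a b h
  simpa [Sym2.eq, Sym2.rel_iff'] using h

lemma C_inj : Function.Injective (fun i : Fin m =>
    s(s9z V m, (Sum.inr (Sum.inr i) : V ⊕ Unit ⊕ Fin m))) := by
  intro a b h
  simpa [Sym2.eq, Sym2.rel_iff'] using h

variable [Fintype V]

lemma ncard_A : (Sym2.map (Sum.inl : V → V ⊕ Unit ⊕ Fin m) '' G.edgeSet).ncard
    = G.edgeSet.ncard :=
  Set.ncard_image_of_injective _ (Sym2.map.injective Sum.inl_injective)

lemma ncard_B : (((fun v : V => s(Sum.inl v, s9z V m)) '' Set.univ)).ncard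
    = Fintype.card V := by
  rw [Set.ncard_image_of_injective _ B_inj, Set.ncard_univ, Nat.card_eq_fintype_card]

lemma ncard_C : (((fun i : Fin m => s(s9z V m, (Sum.inr (Sum.inr i) : V ⊕ Unit ⊕ Fin m)))
    '' Set.univ)).ncard = m := by
  rw [Set.ncard_image_of_injective _ C_inj, Set.ncard_univ, Nat.card_eq_fintype_card,
    Fintype.card_fin]

lemma covered_eq (S : Finset V) (S' : Finset (V ⊕ Unit ⊕ Fin m))
    (hz : s9z V m ∈ S') (hS : ∀ u : V, Sum.inl u ∈ S' ↔ u ∈ S) :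
    {e ∈ (stmt9Graph G m).edgeSet | ∃ v ∈ S', v ∈ e}.ncard
      = {e ∈ G.edgeSet | ∃ v ∈ S, v ∈ e}.ncard + Fintype.card V + m := by
  classical
  set T := {e ∈ G.edgeSet | ∃ v ∈ S, v ∈ e} with hT
  set B := ((fun v : V => s(Sum.inl v, s9z V m)) '' Set.univ) with hB
  set C := ((fun i : Fin m => s(s9z V m, (Sum.inr (Sum.inr i) : V ⊕ Unit ⊕ Fin m)))
      '' Set.univ) with hC
  have key : {e ∈ (stmt9Graph G m).edgeSet | ∃ v ∈ S', v ∈ e}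
      = (Sym2.map Sum.inl '' T) ∪ B ∪ C := by
    ext e
    constructor
    · rintro ⟨he, v, hv, hve⟩
      rw [edgeSet_eq] at he
      rcases he with (hA | hBm) | hCm
      · left; left
        obtain ⟨e', he', rfl⟩ := hA
        rcases Sym2.mem_map.1 hve with ⟨u, hu, rfl⟩
        exact ⟨e', ⟨he', u, (hS u).1 hv, hu⟩, rfl⟩
      · exact Or.inl (Or.inr hBm)
      · exact Or.inr hCm
    · rintro ((⟨e', ⟨he', u, hu, hue⟩, rfl⟩ | ⟨v, _, rfl⟩) | ⟨i, _, rfl⟩)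
      · refine ⟨?_, Sum.inl u, (hS u).2 hu, Sym2.mem_map.2 ⟨u, hue, rfl⟩⟩
        rw [edgeSet_eq]; exact Or.inl (Or.inl ⟨e', he', rfl⟩)
      · refine ⟨?_, s9z V m, hz, Sym2.mem_mk_right _ _⟩
        rw [edgeSet_eq]; exact Or.inl (Or.inr ⟨v, trivial, rfl⟩)
      · refine ⟨?_, s9z V m, hz, Sym2.mem_mk_left _ _⟩
        rw [edgeSet_eq]; exact Or.inr ⟨i, trivial, rfl⟩
  have hTsub : Sym2.map (Sum.inl : V → V ⊕ Unit ⊕ Fin m) '' T ⊆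
      Sym2.map Sum.inl '' G.edgeSet := Set.image_mono (fun e he => he.1)
  have dAB : Disjoint (Sym2.map (Sum.inl : V → V ⊕ Unit ⊕ Fin m) '' T) B := by
    rw [Set.disjoint_right]
    rintro e ⟨v, _, rfl⟩ hmem
    exact notmem_A (G := G) (Sum.inl ()) (Sym2.mem_mk_right _ _) (hTsub hmem)
  have dABC : Disjoint ((Sym2.map (Sum.inl : V → V ⊕ Unit ⊕ Fin m) '' T) ∪ B) C := by
    rw [Set.disjoint_right]
    rintro e ⟨i, _, rfl⟩ (hA | ⟨v, _, hv⟩)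
    · exact notmem_A (G := G) (Sum.inr i) (Sym2.mem_mk_right _ _) (hTsub hA)
    · simp [Sym2.eq, Sym2.rel_iff'] at hv
  rw [key, Set.ncard_union_eq dABC (Set.toFinite _) (Set.toFinite _),
    Set.ncard_union_eq dAB (Set.toFinite _) (Set.toFinite _),
    Set.ncard_image_of_injective _ (Sym2.map.injective Sum.inl_injective), hB, ncard_B,
    hC, ncard_C]

end Stmt9Aux

/-- Reduction from Partial Vertex Cover to Connected Partial Vertex Cover. -/
theorem stmt_9 {V : Type*} [Fintype V] (G : SimpleGraph V) (k t n m : ℕ)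
    (hn : n = Fintype.card V) (hm : m = G.edgeSet.ncard) :
    (∃ S : Finset V, S.card ≤ k ∧
        t ≤ {e ∈ G.edgeSet | ∃ v ∈ S, v ∈ e}.ncard) ↔
    (∃ S' : Finset (V ⊕ Unit ⊕ Fin m), S'.card ≤ k + 1 ∧
        ((stmt9Graph G m).induce (S' : Set (V ⊕ Unit ⊕ Fin m))).Connected ∧
        m + n + t ≤ {e ∈ (stmt9Graph G m).edgeSet | ∃ v ∈ S', v ∈ e}.ncard) := by
  classical
  open Stmt9Aux in
  constructor
  · rintro ⟨S, hk, ht⟩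
    set S' : Finset (V ⊕ Unit ⊕ Fin m) :=
      insert (s9z V m) (S.map ⟨Sum.inl, Sum.inl_injective⟩) with hS'def
    refine ⟨S', ?_, ?_, ?_⟩
    · calc S'.card ≤ (S.map ⟨Sum.inl, Sum.inl_injective⟩).card + 1 :=
            Finset.card_insert_le _ _
        _ ≤ k + 1 := by rw [Finset.card_map]; omega
    · have hzmem : s9z V m ∈ (↑S' : Set (V ⊕ Unit ⊕ Fin m)) := by simp [hS'def]
      rw [SimpleGraph.connected_iff]
      refine ⟨fun a b => ?_, ⟨⟨_, hzmem⟩⟩⟩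
      have key : ∀ a : (↑S' : Set (V ⊕ Unit ⊕ Fin m)),
          ((stmt9Graph G m).induce (↑S' : Set (V ⊕ Unit ⊕ Fin m))).Reachable
            a ⟨_, hzmem⟩ := by
        rintro ⟨x, hx⟩
        rcases Finset.mem_insert.1 (by exact_mod_cast hx) with h | h
        · have hxe : (⟨x, hx⟩ : (↑S' : Set (V ⊕ Unit ⊕ Fin m))) = ⟨s9z V m, hzmem⟩ :=
            Subtype.ext h
          rw [hxe]
        · obtain ⟨u, hu, rfl⟩ := Finset.mem_map.1 h
          exact SimpleGraph.Adj.reachable (adj_inl_z (G := G) (m := m) (u := u))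
      exact (key a).trans (key b).symm
    · have := covered_eq (G := G) S S'
        (Finset.mem_insert_self _ _) (fun u => by simp [hS'def])
      rw [this, ← hn]
      omega
  · rintro ⟨S', hk', hconn, hcount⟩
    by_cases hz : s9z V m ∈ S'
    · set S : Finset V := Finset.univ.filter (fun u => Sum.inl u ∈ S') with hSdef
      have hS : ∀ u : V, Sum.inl u ∈ S' ↔ u ∈ S := fun u => by simp [hSdef]
      refine ⟨S, ?_, ?_⟩
      · have hsub : S.map ⟨Sum.inl, Sum.inl_injective⟩ ⊆ S'.erase (s9z V m) := by
          intro x hx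
          obtain ⟨u, hu, rfl⟩ := Finset.mem_map.1 hx
          exact Finset.mem_erase.2 ⟨by simp, (hS u).2 hu⟩
        have := Finset.card_le_card hsub
        rw [Finset.card_map, Finset.card_erase_of_mem hz] at this
        omega
      · have := covered_eq (G := G) S S' hz hS
        rw [this, ← hn] at hcount
        omega
    · -- z not in S' : derive t = 0
      have ht0 : t = 0 := by
        by_cases hpend : ∃ i : Fin m, Sum.inr (Sum.inr i) ∈ S'
        · obtain ⟨i, hi⟩ := hpend
          have hi' : (Sum.inr (Sum.inr i) : V ⊕ Unit ⊕ Fin m) ∈ (↑S' :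
              Set (V ⊕ Unit ⊕ Fin m)) := by exact_mod_cast hi
          have hone : ∀ x ∈ (↑S' : Set (V ⊕ Unit ⊕ Fin m)), x = Sum.inr (Sum.inr i) := by
            intro x hx
            obtain ⟨w⟩ := hconn.preconnected ⟨_, hi'⟩ ⟨x, hx⟩
            cases w with
            | nil => rfl
            | cons h _ =>
              exfalso
              rename_i b _
              have hb : (stmt9Graph G m).Adj (Sum.inr (Sum.inr i)) b.1 := by
                simpa [SimpleGraph.comap_adj] using h
              have := adj_pend hb
              exact hz (by simpa [← this] using b.2)
          have hsub : {e ∈ (stmt9Graph G m).edgeSet | ∃ v ∈ S', v ∈ e} ⊆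
              {s(s9z V m, (Sum.inr (Sum.inr i) : V ⊕ Unit ⊕ Fin m))} := by
            rintro e ⟨he, v, hv, hve⟩
            have := hone v hv
            subst this
            rw [edgeSet_eq] at he
            rcases he with (hA | ⟨u, _, rfl⟩) | ⟨j, _, rfl⟩
            · exact absurd hA (notmem_A _ hve)
            · simp at hve
            · simp only [Sym2.mem_iff, Sum.inr.injEq, reduceCtorEq, false_or] at hve
              simp [hve]
          have h1 : {e ∈ (stmt9Graph G m).edgeSet | ∃ v ∈ S', v ∈ e}.ncard ≤ 1 := by
            simpa using Set.ncard_le_ncard hsub (Set.finite_singleton _)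
          have := i.pos
          omega
        · push_neg at hpend
          have hsub : {e ∈ (stmt9Graph G m).edgeSet | ∃ v ∈ S', v ∈ e} ⊆
              (Sym2.map Sum.inl '' G.edgeSet) ∪
              ((fun v : V => s(Sum.inl v, s9z V m)) '' Set.univ) := by
            rintro e ⟨he, v, hv, hve⟩
            rw [edgeSet_eq] at he
            rcases he with h | ⟨j, _, rfl⟩
            · exact h
            · rcases Sym2.mem_iff.1 hve with rfl | rfl
              · exact absurd hv hz
              · exact absurd hv (hpend j)
          have hle : {e ∈ (stmt9Graph G m).edgeSet | ∃ v ∈ S', v ∈ e}.ncard ≤ m + n := by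
            calc _ ≤ ((Sym2.map Sum.inl '' G.edgeSet) ∪
                ((fun v : V => s(Sum.inl v, s9z V m)) '' Set.univ)).ncard :=
                  Set.ncard_le_ncard hsub (Set.toFinite _)
              _ ≤ (Sym2.map (Sum.inl : V → V ⊕ Unit ⊕ Fin m) '' G.edgeSet).ncard +
                  ((fun v : V => s(Sum.inl v, s9z V m)) '' Set.univ).ncard :=
                  Set.ncard_union_le _ _
              _ = m + n := by rw [ncard_A, ncard_B, hm, hn]
          omega
      exact ⟨∅, by simp, by simp [ht0]⟩
end

section
/- Let G be a finite simple graph on vertex set V that is 2-degenerate, witnessed by a linear ordering of V in which every vertex has at most 2 neighbors occurring later in the ordering. Let H be the bipartite graph whose vertex set consists of two disjoint copies V^R and V^B of V, in which u^R ∈ V^R is adjacent to v^B ∈ V^B if and only if v belongs to the closed neighborhood N_G[u] of u in G. Then H is 3-degenerate: there exists a linear ordering of the vertices of H in which every vertex has at most 3 neighbors occurring later in the ordering. -/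
/-!
Order `H` by the degeneracy order of `G`, placing each blue copy `v^B = inr v` immediately before its
red copy `v^R = inl v`. The later neighbours of `u^R` are then the blue copies of the later
`G`-neighbours of `u` (its own copy `u^B` comes earlier), and the later neighbours of `v^B` are
`v^R` together with the red copies of the later `G`-neighbours of `v`: at most `2 + 1`.
-/

instance Prod.Lex.isStrictTotalOrder {α β : Type*} (r : α → α → Prop) (s : β → β → Prop)
    [IsStrictTotalOrder α r] [IsStrictTotalOrder β s] :
    IsStrictTotalOrder (α × β) (Prod.Lex r s) where

namespace Sum

variable {V : Type*}

/-- Since `false < true`, the right copy of a vertex is placed just before its left copy. -/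
def twinKey : V ⊕ V → V × Bool :=
  Sum.elim (fun v => (v, true)) (fun v => (v, false))

theorem twinKey_injective : (twinKey : V ⊕ V → V × Bool).Injective := by
  rintro (u | u) (v | v) h <;> simp_all [twinKey]

def twinOrder (r : V → V → Prop) : V ⊕ V → V ⊕ V → Prop :=
  Function.onFun (Prod.Lex r (· < ·)) twinKey

theorem isStrictTotalOrder_twinOrder (r : V → V → Prop) [IsStrictTotalOrder V r] :
    IsStrictTotalOrder (V ⊕ V) (twinOrder r) :=
  twinKey_injective.isStrictTotalOrder_onFun _

variable {r : V → V → Prop}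

@[simp]
theorem twinOrder_inl_inr {u v : V} : twinOrder r (inl u) (inr v) ↔ r u v := by
  simp [twinOrder, Function.onFun, twinKey, Prod.lex_def]

@[simp]
theorem twinOrder_inr_inl {u v : V} : twinOrder r (inr u) (inl v) ↔ r u v ∨ u = v := by
  simp [twinOrder, Function.onFun, twinKey, Prod.lex_def]

end Sum

open Sum

section LaterNeighbours

variable {V : Type*} {G : SimpleGraph V} {H : SimpleGraph (V ⊕ V)} {r : V → V → Prop}

theorem setOf_adj_inl_twinOrder [Std.Irrefl r]
    (hH1 : ∀ u v : V, H.Adj (inl u) (inr v) ↔ (v = u ∨ G.Adj u v))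
    (hH2 : ∀ u v : V, ¬ H.Adj (inl u) (inl v)) (u : V) :
    {y | H.Adj (inl u) y ∧ twinOrder r (inl u) y} = inr '' {v | G.Adj u v ∧ r u v} := by
  ext (w | w)
  · simp [hH2]
  · simp only [Set.mem_ofPred_eq, hH1, twinOrder_inl_inr, Set.mem_image, inr.injEq,
      exists_eq_right]
    constructor
    · rintro ⟨rfl | hadj, hlt⟩
      · exact absurd hlt (Std.Irrefl.irrefl w)
      · exact ⟨hadj, hlt⟩
    · exact fun ⟨hadj, hlt⟩ => ⟨Or.inr hadj, hlt⟩

theorem setOf_adj_inr_twinOrder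
    (hH1 : ∀ u v : V, H.Adj (inl u) (inr v) ↔ (v = u ∨ G.Adj u v))
    (hH3 : ∀ u v : V, ¬ H.Adj (inr u) (inr v)) (v : V) :
    {y | H.Adj (inr v) y ∧ twinOrder r (inr v) y} =
      insert (inl v) (inl '' {u | G.Adj v u ∧ r v u}) := by
  ext (w | w)
  · simp only [Set.mem_ofPred_eq, H.adj_comm (inr v), hH1, twinOrder_inr_inl, Set.mem_insert_iff,
      inl.injEq, Set.mem_image, exists_eq_right, G.adj_comm w]
    grind
  · simp [hH3]

end LaterNeighbours

theorem stmt_10_general {V : Type*} (G : SimpleGraph V)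
    (lt₀ : V → V → Prop) (h₀ : IsStrictTotalOrder V lt₀)
    (hdeg : ∀ v : V, {u : V | G.Adj v u ∧ lt₀ v u}.ncard ≤ 2)
    (H : SimpleGraph (V ⊕ V))
    (hH1 : ∀ u v : V, H.Adj (Sum.inl u) (Sum.inr v) ↔ (v = u ∨ G.Adj u v))
    (hH2 : ∀ u v : V, ¬ H.Adj (Sum.inl u) (Sum.inl v))
    (hH3 : ∀ u v : V, ¬ H.Adj (Sum.inr u) (Sum.inr v)) :
    ∃ lt : (V ⊕ V) → (V ⊕ V) → Prop, IsStrictTotalOrder (V ⊕ V) lt ∧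
      ∀ x : V ⊕ V, {y : V ⊕ V | H.Adj x y ∧ lt x y}.ncard ≤ 3 := by
  refine ⟨twinOrder lt₀, isStrictTotalOrder_twinOrder lt₀, ?_⟩
  rintro (u | v)
  · rw [setOf_adj_inl_twinOrder hH1 hH2, Set.ncard_image_of_injective _ inr_injective]
    exact (hdeg u).trans (by norm_num)
  · rw [setOf_adj_inr_twinOrder hH1 hH3]
    calc _ ≤ (inl '' {u | G.Adj v u ∧ lt₀ v u}).ncard + 1 := Set.ncard_insert_le _ _
      _ ≤ 3 := by
        rw [Set.ncard_image_of_injective _ inl_injective]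
        exact Nat.add_le_add_right (hdeg v) 1

/-- If `G` is `2`-degenerate (witnessed by a strict total order in which every vertex has
at most `2` later neighbors), then the bipartite incidence graph `H` of closed
neighborhoods on two copies of `V` is `3`-degenerate. -/
theorem stmt_10 {V : Type*} [Fintype V] (G : SimpleGraph V)
    (lt₀ : V → V → Prop) (h₀ : IsStrictTotalOrder V lt₀)
    (hdeg : ∀ v : V, {u : V | G.Adj v u ∧ lt₀ v u}.ncard ≤ 2)
    (H : SimpleGraph (V ⊕ V))
    (hH1 : ∀ u v : V, H.Adj (Sum.inl u) (Sum.inr v) ↔ (v = u ∨ G.Adj u v))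
    (hH2 : ∀ u v : V, ¬ H.Adj (Sum.inl u) (Sum.inl v))
    (hH3 : ∀ u v : V, ¬ H.Adj (Sum.inr u) (Sum.inr v)) :
    ∃ lt : (V ⊕ V) → (V ⊕ V) → Prop, IsStrictTotalOrder (V ⊕ V) lt ∧
      ∀ x : V ⊕ V, {y : V ⊕ V | H.Adj x y ∧ lt x y}.ncard ≤ 3 :=
  stmt_10_general G lt₀ h₀ hdeg H hH1 hH2 hH3
end

section
/- Let G be a finite simple graph, and let k ≥ 1 and t be natural numbers. Let H be the bipartite graph whose parts are R = V(G) ∪ {z}, where z is a new vertex, and B, a disjoint copy of V(G), in which each u ∈ V(G) ⊆ R is adjacent to the copy of v in B if and only if v ∈ N_G[u], and z has no neighbors in H. Let St be the star graph on R with center z, i.e., z is adjacent to every vertex of V(G) ⊆ R and there are no other edges. Then G has a set S of at most k vertices with |N_G[S]| ≥ t if and only if there exists S' ⊆ R with |S'| ≤ k+1 such that the induced subgraph St[S'] is connected and |N_H(S')| ≥ t. -/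
private lemma edgeless_reach {α : Type*} {G : SimpleGraph α} (hG : ∀ a b, ¬ G.Adj a b)
    {a b : α} (h : G.Reachable a b) : a = b := by
  obtain ⟨w⟩ := h
  cases w with
  | nil => rfl
  | cons h' _ => exact absurd h' (hG _ _)

/-- Reduction of Partial Dominating Set to `PartialConRBDS` with a star connectivity
graph: `G` has a set of at most `k` vertices dominating at least `t` vertices iff the
star-constrained red-blue instance has a connected solution of size at most `k + 1`
dominating at least `t` blue vertices. -/
theorem stmt_13 {V : Type*} [Fintype V] (G : SimpleGraph V) (k t : ℕ) (hk : 1 ≤ k)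
    (HAdj : (V ⊕ Unit) → V → Prop)
    (hHAdj : ∀ x v, HAdj x v ↔ ∃ u, x = Sum.inl u ∧ (v = u ∨ G.Adj u v))
    (St : SimpleGraph (V ⊕ Unit))
    (hSt : ∀ x y, St.Adj x y ↔
      ((∃ u, x = Sum.inr () ∧ y = Sum.inl u) ∨ (∃ u, x = Sum.inl u ∧ y = Sum.inr ()))) :
    (∃ S : Finset V, S.card ≤ k ∧
        t ≤ {v : V | v ∈ S ∨ ∃ u ∈ S, G.Adj u v}.ncard) ↔
    (∃ S' : Finset (V ⊕ Unit), S'.card ≤ k + 1 ∧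
        (St.induce (S' : Set (V ⊕ Unit))).Connected ∧
        t ≤ {v : V | ∃ x ∈ S', HAdj x v}.ncard) := by
  classical
  -- key equivalence: for any S' and its preimage under inl, neighborhoods coincide
  have hnbhd : ∀ (S' : Finset (V ⊕ Unit)),
      {v : V | ∃ x ∈ S', HAdj x v}
        = {v : V | v ∈ S'.preimage Sum.inl Sum.inl_injective.injOn ∨
            ∃ u ∈ S'.preimage Sum.inl Sum.inl_injective.injOn, G.Adj u v} := by
    intro S'
    ext v
    simp only [Set.mem_setOf_eq, hHAdj, Finset.mem_preimage]
    constructor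
    · rintro ⟨x, hx, u, rfl, (rfl | hadj)⟩
      · exact Or.inl hx
      · exact Or.inr ⟨u, hx, hadj⟩
    · rintro (hv | ⟨u, hu, hadj⟩)
      · exact ⟨Sum.inl v, hv, v, rfl, Or.inl rfl⟩
      · exact ⟨Sum.inl u, hu, u, rfl, Or.inr hadj⟩
  constructor
  · rintro ⟨S, hcard, ht⟩
    set S' : Finset (V ⊕ Unit) := insert (Sum.inr ()) (S.image Sum.inl) with hS'def
    have hz : (Sum.inr () : V ⊕ Unit) ∈ S' := Finset.mem_insert_self _ _
    refine ⟨S', ?_, ?_, ?_⟩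
    · calc S'.card ≤ (S.image Sum.inl).card + 1 := by exact Finset.card_insert_le _ _
        _ ≤ S.card + 1 := by have := Finset.card_image_le (s := S) (f := (Sum.inl : V → V ⊕ Unit)); omega
        _ ≤ k + 1 := by omega
    · have key : ∀ a : (S' : Set (V ⊕ Unit)),
          (St.induce (S' : Set (V ⊕ Unit))).Reachable a ⟨Sum.inr (), hz⟩ := by
        rintro ⟨a, ha⟩
        match a with
        | Sum.inr () => rfl
        | Sum.inl u =>
          refine SimpleGraph.Adj.reachable ?_
          show St.Adj (Sum.inl u) (Sum.inr ())
          exact (hSt _ _).mpr (Or.inr ⟨u, rfl, rfl⟩)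
      haveI : Nonempty ((S' : Set (V ⊕ Unit))) := ⟨⟨Sum.inr (), hz⟩⟩
      exact SimpleGraph.Connected.mk (fun a b => (key a).trans (key b).symm)
    · -- neighborhood
      rw [hnbhd S']
      have hpre : S'.preimage Sum.inl Sum.inl_injective.injOn = S := by
        ext v
        simp [hS'def]
      rw [hpre]
      exact ht
  · rintro ⟨S', hcard, hconn, ht⟩
    set S : Finset V := S'.preimage Sum.inl Sum.inl_injective.injOn with hSdef
    have hsub : S.image Sum.inl ⊆ S' := by
      intro x hx
      simp only [Finset.mem_image] at hx
      obtain ⟨v, hv, rfl⟩ := hx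
      simpa [hSdef] using hv
    have hScard : S.card ≤ k := by
      by_cases hz : (Sum.inr () : V ⊕ Unit) ∈ S'
      · have hsub' : S.image Sum.inl ⊆ S'.erase (Sum.inr ()) := by
          intro x hx
          refine Finset.mem_erase.mpr ⟨?_, hsub hx⟩
          simp only [Finset.mem_image] at hx
          obtain ⟨v, _, rfl⟩ := hx
          simp
        have h1 : S.card ≤ (S'.erase (Sum.inr ())).card := by
          rw [← Finset.card_image_of_injective S (Sum.inl_injective : Function.Injective (Sum.inl : V → V ⊕ Unit))]
          exact Finset.card_le_card hsub'
        have h2 : (S'.erase (Sum.inr ())).card = S'.card - 1 :=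
          Finset.card_erase_of_mem hz
        omega
      · -- induced graph is edgeless, hence S' has at most one element
        have hnoadj : ∀ a b : (S' : Set (V ⊕ Unit)),
            ¬ (St.induce (S' : Set (V ⊕ Unit))).Adj a b := by
          rintro ⟨a, ha⟩ ⟨b, hb⟩ hab
          have : St.Adj a b := hab
          rcases (hSt _ _).mp this with ⟨u, rfl, rfl⟩ | ⟨u, rfl, rfl⟩
          · exact hz ha
          · exact hz hb
        have hone : S'.card ≤ 1 := by
          rw [Finset.card_le_one]
          intro a ha b hb
          have := edgeless_reach hnoadj
            (hconn.preconnected ⟨a, ha⟩ ⟨b, hb⟩)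
          exact congrArg Subtype.val this
        have h1 : S.card ≤ S'.card := by
          rw [← Finset.card_image_of_injective S (Sum.inl_injective : Function.Injective (Sum.inl : V → V ⊕ Unit))]
          exact Finset.card_le_card hsub
        omega
    refine ⟨S, hScard, ?_⟩
    rwa [hnbhd S'] at ht
end
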